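/- Let A be a commutative noetherian ring, M a finitely generated A-module, and φ: M → F a versal map into a finitely generated free A-module F. Then I(M) = ker(Sym(φ): Sym(M) → Sym(F)); consequently the Rees algebra R(M) = Sym(M)/I(M) is isomorphic to the image of Sym(φ) in Sym(F). -/

import Mathlib

open Module LinearMap

/-- A linear map `φ : M → F` is *versal* if every linear map from `M` into a finitely
generated free module factors through `φ`. -/
def IsVersal (A : Type) [CommRing A] {M F : Type} [AddCommGroup M] [Module A M]
    [AddCommGroup F] [Module A F] (φ : M →ₗ[A] F) : Prop :=
  ∀ (E : Type) [AddCommGroup E] [Module A E] [Module.Free A E] [Module.Finite A E]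
    (g : M →ₗ[A] E), ∃ h : F →ₗ[A] E, g = h ∘ₗ φ

open Module LinearMap TensorProduct

/-- The relation on the tensor algebra whose quotient is the symmetric algebra. -/
inductive SymRel (A : Type) [CommRing A] (M : Type) [AddCommGroup M] [Module A M] :
    TensorAlgebra A M → TensorAlgebra A M → Prop
  | mul_comm (x y : M) : SymRel A M (TensorAlgebra.ι A x * TensorAlgebra.ι A y)
      (TensorAlgebra.ι A y * TensorAlgebra.ι A x)

/-- The symmetric algebra `Sym(M)` of a module `M`. -/
abbrev SymmAlg (A : Type) [CommRing A] (M : Type) [AddCommGroup M] [Module A M] : Type :=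
  RingQuot (SymRel A M)

variable {A : Type} [CommRing A] {M N L : Type} [AddCommGroup M] [Module A M]
  [AddCommGroup N] [Module A N] [AddCommGroup L] [Module A L]

private lemma symmAlg_comm_aux (x y : TensorAlgebra A M) :
    RingQuot.mkAlgHom A (SymRel A M) x * RingQuot.mkAlgHom A (SymRel A M) y =
      RingQuot.mkAlgHom A (SymRel A M) y * RingQuot.mkAlgHom A (SymRel A M) x := by
  induction x using TensorAlgebra.induction with
  | algebraMap r => simp [Algebra.commutes]
  | ι m =>
    induction y using TensorAlgebra.induction with
    | algebraMap r => simp [Algebra.commutes]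
    | ι n => simpa [map_mul] using (RingQuot.mkAlgHom_rel A (SymRel.mul_comm m n))
    | mul a b ha hb => rw [map_mul, ← mul_assoc, ha, mul_assoc, hb, ← mul_assoc]
    | add a b ha hb => rw [map_add, mul_add, add_mul, ha, hb]
  | mul a b ha hb => rw [map_mul, mul_assoc, hb, ← mul_assoc, ha, mul_assoc]
  | add a b ha hb => rw [map_add, add_mul, mul_add, ha, hb]

noncomputable instance (A : Type) [CommRing A] (M : Type) [AddCommGroup M] [Module A M] :
    CommRing (SymmAlg A M) :=
  { (inferInstance : Ring (SymmAlg A M)) with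
    mul_comm := fun a b => by
      obtain ⟨x, rfl⟩ := RingQuot.mkAlgHom_surjective A (SymRel A M) a
      obtain ⟨y, rfl⟩ := RingQuot.mkAlgHom_surjective A (SymRel A M) b
      exact symmAlg_comm_aux x y }

/-- The canonical inclusion of `M` into the degree-one part of `Sym(M)`. -/
noncomputable def symι (A : Type) [CommRing A] {M : Type} [AddCommGroup M] [Module A M] :
    M →ₗ[A] SymmAlg A M :=
  (RingQuot.mkAlgHom A (SymRel A M)).toLinearMap ∘ₗ TensorAlgebra.ι A

/-- Functoriality of the symmetric algebra: `Sym(g) : Sym(M) → Sym(N)`. -/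
noncomputable def symMap (A : Type) [CommRing A] {M N : Type} [AddCommGroup M] [Module A M]
    [AddCommGroup N] [Module A N] (g : M →ₗ[A] N) : SymmAlg A M →ₐ[A] SymmAlg A N :=
  RingQuot.liftAlgHom A ⟨TensorAlgebra.lift A ((symι A) ∘ₗ g), by
    intro x y h
    cases h with
    | mul_comm a b => simp [mul_comm]⟩

@[simp] lemma symMap_ι (g : M →ₗ[A] N) (m : M) :
    symMap A g (symι A m) = symι A (g m) := by
  simp [symMap, symι, RingQuot.liftAlgHom_mkAlgHom_apply]

lemma symmAlg_hom_ext {B : Type} [Semiring B] [Algebra A B] {f g : SymmAlg A M →ₐ[A] B}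
    (h : ∀ m : M, f (symι A m) = g (symι A m)) : f = g := by
  have key : f.comp (RingQuot.mkAlgHom A (SymRel A M)) =
      g.comp (RingQuot.mkAlgHom A (SymRel A M)) := by
    apply TensorAlgebra.hom_ext
    apply LinearMap.ext
    intro m
    simpa [symι] using h m
  apply AlgHom.ext
  intro x
  obtain ⟨x, rfl⟩ := RingQuot.mkAlgHom_surjective A (SymRel A M) x
  exact AlgHom.congr_fun key x

lemma symMap_comp_apply (g : N →ₗ[A] L) (f : M →ₗ[A] N) (x : SymmAlg A M) :
    symMap A (g ∘ₗ f) x = symMap A g (symMap A f x) := by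
  have : symMap A (g ∘ₗ f) = (symMap A g).comp (symMap A f) := by
    apply symmAlg_hom_ext
    intro m
    simp
  rw [this]; rfl

/-- The data of a linear map from `M` into a finitely generated free module. -/
structure FreeTarget (A : Type) [CommRing A] (M : Type) [AddCommGroup M] [Module A M] where
  E : Type
  [instAddCommGroup : AddCommGroup E]
  [instModule : Module A E]
  [instFree : Module.Free A E]
  [instFinite : Module.Finite A E]
  g : M →ₗ[A] E

attribute [instance] FreeTarget.instAddCommGroup FreeTarget.instModule
  FreeTarget.instFree FreeTarget.instFinite

/-- The ideal `I(M) ⊆ Sym(M)`: the intersection over all maps `g : M → E` into finitely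
generated free modules of the kernels of `Sym(g)`. -/
noncomputable def reesIdeal (A : Type) [CommRing A] (M : Type) [AddCommGroup M]
    [Module A M] : Ideal (SymmAlg A M) :=
  ⨅ d : FreeTarget A M, RingHom.ker (symMap A d.g)

lemma reesIdeal_le_comap (f : M →ₗ[A] N) :
    reesIdeal A M ≤ Ideal.comap (symMap A f) (reesIdeal A N) := by
  intro x hx
  simp only [reesIdeal, Ideal.mem_iInf] at hx
  simp only [Ideal.mem_comap, reesIdeal, Ideal.mem_iInf]
  intro d
  have hd := hx ⟨d.E, d.g ∘ₗ f⟩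
  rw [RingHom.mem_ker] at hd ⊢
  rw [← symMap_comp_apply]
  exact hd

/-- The Rees algebra `R(M) = Sym(M)/I(M)` of a module `M`. -/
noncomputable abbrev ReesAlg (A : Type) [CommRing A] (M : Type) [AddCommGroup M]
    [Module A M] : Type :=
  SymmAlg A M ⧸ reesIdeal A M

/-- The induced map `R(f) : R(M) → R(N)` of Rees algebras. -/
noncomputable def reesMap (A : Type) [CommRing A] {M N : Type} [AddCommGroup M]
    [Module A M] [AddCommGroup N] [Module A N] (f : M →ₗ[A] N) :
    ReesAlg A M →ₐ[A] ReesAlg A N :=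
  Ideal.quotientMapₐ (reesIdeal A N) (symMap A f) (reesIdeal_le_comap f)

variable {F : Type} [AddCommGroup F] [Module A F]

lemma reesIdeal_le_ker_symMap (E : Type) [AddCommGroup E] [Module A E] [Module.Free A E]
    [Module.Finite A E] (g : M →ₗ[A] E) : reesIdeal A M ≤ RingHom.ker (symMap A g) :=
  iInf_le (fun d : FreeTarget A M => RingHom.ker (symMap A d.g)) ⟨E, g⟩

lemma IsVersal.ker_symMap_le_reesIdeal {φ : M →ₗ[A] F} (hφ : IsVersal A φ) :
    RingHom.ker (symMap A φ) ≤ reesIdeal A M := by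
  intro x hx
  refine Ideal.mem_iInf.mpr fun d => ?_
  obtain ⟨h, hg⟩ := hφ d.E d.g
  rw [RingHom.mem_ker, hg, symMap_comp_apply, RingHom.mem_ker.mp hx, map_zero]

lemma IsVersal.reesIdeal_eq_ker_symMap [Module.Free A F] [Module.Finite A F]
    {φ : M →ₗ[A] F} (hφ : IsVersal A φ) : reesIdeal A M = RingHom.ker (symMap A φ) :=
  le_antisymm (reesIdeal_le_ker_symMap F φ) hφ.ker_symMap_le_reesIdeal

noncomputable def IsVersal.reesAlgEquivRange [Module.Free A F] [Module.Finite A F]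
    {φ : M →ₗ[A] F} (hφ : IsVersal A φ) : ReesAlg A M ≃ₐ[A] (symMap A φ).range :=
  (Ideal.quotientEquivAlgOfEq A hφ.reesIdeal_eq_ker_symMap).trans
    (Ideal.quotientKerEquivRange (symMap A φ))

theorem stmt3 (A : Type) [CommRing A]
    (M F : Type) [AddCommGroup M] [Module A M]
    [AddCommGroup F] [Module A F] [Module.Free A F] [Module.Finite A F]
    (φ : M →ₗ[A] F) (hφ : IsVersal A φ) :
    reesIdeal A M = RingHom.ker (symMap A φ) ∧
      Nonempty (ReesAlg A M ≃ₐ[A] (symMap A φ).range) :=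
  ⟨hφ.reesIdeal_eq_ker_symMap, ⟨hφ.reesAlgEquivRange⟩⟩
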